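/- arXiv:2106.12141 — 2 statements merged into one kernel-verified Lean document; each statement's English description precedes it below -/
import Mathlib

section
/- Block matrix identity for the middle digraph: With notation as in the paper, the vertex-weighted Laplacian of M(D) equals the block matrix [[F, −M], [−LQ, B + F^ι − W^ι]], where F is the diagonal matrix of weighted outdegrees of D, M is the n×m matrix with M_{ve}=χ_e if t(e)=v and 0 otherwise, L is the m×n matrix with L_{ev}=1 if h(e)=v and 0 otherwise, Q is the diagonal matrix of vertex weights, B is diagonal with B_{ee}=χ(h(e)), W^ι has entry χ_f at (e,f) if h(e)=t(f) and 0 otherwise, and F^ι is diagonal with (F^ι)_{ee} = Σ_{g: t(g)=h(e)} χ_g. Moreover W^ι = L·M and W = M·L, where W is the weighted adjacency matrix of D (W_{vw}=χ_e if e=(v,w)∈A(D), else 0). -/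
open scoped Classical BigOperators

section Digraph

variable {V : Type*} [Fintype V] [DecidableEq V]

/-- `T` is a spanning in-tree (arborescence toward the root) of the digraph
with arc set containing `T`, rooted at `r`: every vertex other than `r` has
exactly one outgoing arc in `T`, the root has none, and `T` has no directed cycle. -/
def IsSpTree (T : Finset (V × V)) (r : V) : Prop :=
  (∀ v : V, v ≠ r → ∃! a : V × V, a ∈ T ∧ a.1 = v) ∧
  (∀ a ∈ T, a.1 ≠ r) ∧
  (∀ (v : V) (l : List V), ¬ List.Chain (fun a b => (a, b) ∈ T) v (l ++ [v]))

/-- The set of spanning trees of the digraph with arc set `arcs`, rooted at `r`. -/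
noncomputable def trees (arcs : Finset (V × V)) (r : V) : Finset (Finset (V × V)) :=
  arcs.powerset.filter (fun T => IsSpTree T r)

/-- Edge-weighted complexity with root `r`: `κ^{edge}(D, r, χ)`. -/
noncomputable def kappaEdgeRooted (arcs : Finset (V × V)) (χ : V × V → ℝ) (r : V) : ℝ :=
  ∑ T ∈ trees arcs r, ∏ a ∈ T, χ a

/-- Total edge-weighted complexity `κ^{edge}(D, χ)` (over all roots). -/
noncomputable def kappaEdge (arcs : Finset (V × V)) (χ : V × V → ℝ) : ℝ :=
  ∑ r : V, kappaEdgeRooted arcs χ r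

/-- Vertex-weighted complexity with root `r`: `κ^{vertex}(D, r, χ)`. -/
noncomputable def kappaVertexRooted (arcs : Finset (V × V)) (χv : V → ℝ) (r : V) : ℝ :=
  ∑ T ∈ trees arcs r, ∏ a ∈ T, χv a.2

/-- Total vertex-weighted complexity `κ^{vertex}(D, χ)` (over all roots). -/
noncomputable def kappaVertex (arcs : Finset (V × V)) (χv : V → ℝ) : ℝ :=
  ∑ r : V, kappaVertexRooted arcs χv r

/-- Weighted adjacency matrix `W`: `W_{ij} = χ_{ij}` if `(i,j)` is an arc, else `0`. -/
def adjW (arcs : Finset (V × V)) (χ : V × V → ℝ) : Matrix V V ℝ :=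
  fun i j => if (i, j) ∈ arcs then χ (i, j) else 0

/-- Edge-weighted Laplacian `Δ^{edge}`. -/
def lapEdge (arcs : Finset (V × V)) (χ : V × V → ℝ) : Matrix V V ℝ :=
  fun i j => if i = j then ∑ k ∈ Finset.univ.erase i, adjW arcs χ i k
             else - adjW arcs χ i j

/-- Vertex-weighted Laplacian `Δ^{vertex}`. -/
noncomputable def lapVertex (arcs : Finset (V × V)) (χv : V → ℝ) : Matrix V V ℝ :=
  fun u v => if u = v then ∑ a ∈ arcs.filter (fun a => a.1 = u), χv a.2
             else if (u, v) ∈ arcs then - χv v else 0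

/-- Matrix obtained by deleting the row and column indexed by `v`. -/
def minorAt (A : Matrix V V ℝ) (v : V) : Matrix {u : V // u ≠ v} {u : V // u ≠ v} ℝ :=
  A.submatrix (fun u => (u : V)) (fun u => (u : V))

/-- Out-degree of `v`. -/
def outdeg (arcs : Finset (V × V)) (v : V) : ℕ := (arcs.filter (fun a => a.1 = v)).card

/-- In-degree of `v`. -/
def indeg (arcs : Finset (V × V)) (v : V) : ℕ := (arcs.filter (fun a => a.2 = v)).card

/-- Weighted out-degree `d_v = Σ_{t(e) = v} χ_e`. -/
noncomputable def wOut (arcs : Finset (V × V)) (χ : V × V → ℝ) (v : V) : ℝ :=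
  ∑ a ∈ arcs.filter (fun a => a.1 = v), χ a

end Digraph

section MiddleDigraph

variable {V : Type*} [Fintype V] [DecidableEq V]

/-- Arc set of the middle digraph `M(D)` on the vertex set `V(D) ⊕ A(D)`:
each arc `e = (u, v)` of `D` is replaced by the directed path `u → e → v`, and
there is an arc `e → f` whenever the head of `e` equals the tail of `f`. -/
noncomputable def midArcs (arcs : Finset (V × V)) :
    Finset ((V ⊕ {a : V × V // a ∈ arcs}) × (V ⊕ {a : V × V // a ∈ arcs})) :=
  Finset.univ.filter (fun p =>
    match p with
    | (Sum.inl u, Sum.inr e) => (e : V × V).1 = u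
    | (Sum.inr e, Sum.inl v) => (e : V × V).2 = v
    | (Sum.inr e, Sum.inr f) => (e : V × V).2 = (f : V × V).1
    | _ => False)

/-- Vertex weights of `M(D)`: vertices coming from `V(D)` keep their vertex weight,
and the vertex corresponding to an arc `e` gets the arc weight `χ_e`. -/
noncomputable def midWeight (arcs : Finset (V × V)) (χv : V → ℝ) (χ : V × V → ℝ) :
    V ⊕ {a : V × V // a ∈ arcs} → ℝ :=
  Sum.elim χv (fun e => χ (e : V × V))

end MiddleDigraph

section BlockMatrices

variable {V : Type*} [Fintype V] [DecidableEq V]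

/-- `F`: diagonal matrix of weighted outdegrees of `D`. -/
noncomputable def matF (arcs : Finset (V × V)) (χ : V × V → ℝ) : Matrix V V ℝ :=
  Matrix.of fun u w => if u = w then wOut arcs χ u else 0

/-- `M`: `M_{ve} = χ_e` if `t(e) = v`, else `0`. -/
noncomputable def matM (arcs : Finset (V × V)) (χ : V × V → ℝ) :
    Matrix V {a : V × V // a ∈ arcs} ℝ :=
  Matrix.of fun v e => if (e : V × V).1 = v then χ (e : V × V) else 0

/-- `L`: `L_{ev} = 1` if `h(e) = v`, else `0`. -/
def matL (arcs : Finset (V × V)) : Matrix {a : V × V // a ∈ arcs} V ℝ :=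
  Matrix.of fun e v => if (e : V × V).2 = v then 1 else 0

/-- `Q`: diagonal matrix of vertex weights. -/
def matQ (χv : V → ℝ) : Matrix V V ℝ :=
  Matrix.of fun u w => if u = w then χv u else 0

/-- `B`: diagonal with `B_{ee} = χ(h(e))`. -/
def matB (arcs : Finset (V × V)) (χv : V → ℝ) :
    Matrix {a : V × V // a ∈ arcs} {a : V × V // a ∈ arcs} ℝ :=
  Matrix.of fun e f => if e = f then χv (e : V × V).2 else 0

/-- `W^ι`: entry `χ_f` at `(e, f)` if `h(e) = t(f)`, else `0`. -/
noncomputable def matWiota (arcs : Finset (V × V)) (χ : V × V → ℝ) :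
    Matrix {a : V × V // a ∈ arcs} {a : V × V // a ∈ arcs} ℝ :=
  Matrix.of fun e f => if (e : V × V).2 = (f : V × V).1 then χ (f : V × V) else 0

/-- `F^ι`: diagonal with `(F^ι)_{ee} = Σ_{g : t(g) = h(e)} χ_g`. -/
noncomputable def matFiota (arcs : Finset (V × V)) (χ : V × V → ℝ) :
    Matrix {a : V × V // a ∈ arcs} {a : V × V // a ∈ arcs} ℝ :=
  Matrix.of fun e f => if e = f then wOut arcs χ (e : V × V).2 else 0

end BlockMatrices

/-! The middle digraph of a loopless digraph is loopless, so its vertex-weighted Laplacian is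
`diag(d) − A`, where `d` is the out-weight and `A_{xy} = χ(y)` on arcs `x → y`. Both matrices
split along `V(D) ⊕ A(D)`: the out-weight of a vertex `u` of `D` is `d_u`, that of an arc `e` is
`χ(h e) + d_{h e}` (the arc `e → h e` plus the arcs `e → f` with `t f = h e`), and `A` has the
blocks `0, M, LQ, W^ι`. The factorizations come from `L` picking the row of the head. -/

theorem Finset.filter_fst_eq_map {α β : Type*} [DecidableEq α] [DecidableEq β] [Fintype β]
    (s : Finset (α × β)) (a : α) :
    s.filter (fun p => p.1 = a) =
      (Finset.univ.filter fun y => (a, y) ∈ s).map ⟨Prod.mk a, Prod.mk_right_injective a⟩ := by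
  ext ⟨x, y⟩
  simp only [Finset.mem_filter, Finset.mem_map, Finset.mem_univ, true_and,
    Function.Embedding.coeFn_mk, Prod.mk.injEq]
  constructor
  · rintro ⟨h, rfl⟩
    exact ⟨y, h, rfl, rfl⟩
  · rintro ⟨y, h, rfl, rfl⟩
    exact ⟨h, rfl⟩

section Digraph

variable {V : Type*} [DecidableEq V] (arcs : Finset (V × V))

theorem wOut_eq_sum_subtype (χ : V × V → ℝ) (u : V) :
    wOut arcs χ u = ∑ e : {a : V × V // a ∈ arcs}, if (e : V × V).1 = u then χ e else 0 := by
  rw [wOut, Finset.sum_filter, Finset.sum_coe_sort arcs (fun a => if a.1 = u then χ a else 0)]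

theorem wOut_eq_sum [Fintype V] (χ : V × V → ℝ) (u : V) :
    wOut arcs χ u = ∑ x, if (u, x) ∈ arcs then χ (u, x) else 0 := by
  rw [wOut, Finset.filter_fst_eq_map, Finset.sum_map, Finset.sum_filter]
  rfl

-- The diagonal entry of `lapVertex` also counts loops.
theorem lapVertex_eq_diagonal_sub_adjW (χv : V → ℝ) (hloop : ∀ v : V, (v, v) ∉ arcs) :
    lapVertex arcs χv =
      Matrix.diagonal (wOut arcs (χv ∘ Prod.snd)) - adjW arcs (χv ∘ Prod.snd) := by
  ext u v
  rcases eq_or_ne u v with rfl | huv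
  · simp [lapVertex, adjW, wOut, hloop]
  · by_cases h : (u, v) ∈ arcs <;> simp [lapVertex, adjW, huv, h]

theorem adjW_eq_matM_mul_matL (χ : V × V → ℝ) : adjW arcs χ = matM arcs χ * matL arcs := by
  ext v w
  have hterm (e : {a : V × V // a ∈ arcs}) :
      matM arcs χ v e * matL arcs e w = if (e : V × V) = (v, w) then χ (v, w) else 0 := by
    obtain ⟨⟨x, y⟩, _⟩ := e
    by_cases hx : x = v <;> by_cases hy : y = w <;> simp [matM, matL, hx, hy]
  rw [Matrix.mul_apply, Finset.sum_congr rfl fun e _ => hterm e,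
    Finset.sum_coe_sort arcs fun a => if a = (v, w) then χ (v, w) else 0, Finset.sum_ite_eq']
  rfl

variable [Fintype V]

theorem matL_mul_apply {α : Type*} (X : Matrix V α ℝ) (e : {a : V × V // a ∈ arcs}) (j : α) :
    (matL arcs * X) e j = X (e : V × V).2 j := by
  simp [matL, Matrix.mul_apply]

theorem matWiota_eq_matL_mul_matM (χ : V × V → ℝ) :
    matWiota arcs χ = matL arcs * matM arcs χ := by
  ext e f
  simp [matWiota, matM, matL_mul_apply, eq_comm]

end Digraph

section MiddleDigraph

variable {V : Type*} [Fintype V] (arcs : Finset (V × V))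

@[simp] theorem inl_inl_notMem_midArcs (u v : V) : (Sum.inl u, Sum.inl v) ∉ midArcs arcs := by
  simp [midArcs]

@[simp] theorem inl_inr_mem_midArcs (u : V) (e : {a : V × V // a ∈ arcs}) :
    (Sum.inl u, Sum.inr e) ∈ midArcs arcs ↔ (e : V × V).1 = u := by
  simp [midArcs]

@[simp] theorem inr_inl_mem_midArcs (e : {a : V × V // a ∈ arcs}) (v : V) :
    (Sum.inr e, Sum.inl v) ∈ midArcs arcs ↔ (e : V × V).2 = v := by
  simp [midArcs]

@[simp] theorem inr_inr_mem_midArcs (e f : {a : V × V // a ∈ arcs}) :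
    (Sum.inr e, Sum.inr f) ∈ midArcs arcs ↔ (e : V × V).2 = (f : V × V).1 := by
  simp [midArcs]

theorem midArcs_loopless (hloop : ∀ v : V, (v, v) ∉ arcs) (x : V ⊕ {a : V × V // a ∈ arcs}) :
    (x, x) ∉ midArcs arcs := by
  rcases x with u | ⟨⟨u, v⟩, he⟩
  · simp
  · intro h
    simp only [inr_inr_mem_midArcs] at h
    exact hloop u (h ▸ he)

variable [DecidableEq V] (χv : V → ℝ) (χ : V × V → ℝ)

theorem wOut_midArcs_inl (u : V) :
    wOut (midArcs arcs) (midWeight arcs χv χ ∘ Prod.snd) (Sum.inl u) = wOut arcs χ u := by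
  rw [wOut_eq_sum, wOut_eq_sum_subtype, Fintype.sum_sum_type]
  simp [midWeight]

theorem wOut_midArcs_inr (e : {a : V × V // a ∈ arcs}) :
    wOut (midArcs arcs) (midWeight arcs χv χ ∘ Prod.snd) (Sum.inr e) =
      χv (e : V × V).2 + wOut arcs χ (e : V × V).2 := by
  rw [wOut_eq_sum, wOut_eq_sum_subtype, Fintype.sum_sum_type]
  simp [midWeight, eq_comm]

theorem diagonal_wOut_midArcs :
    Matrix.diagonal (wOut (midArcs arcs) (midWeight arcs χv χ ∘ Prod.snd)) =
      Matrix.fromBlocks (matF arcs χ) 0 0 (matB arcs χv + matFiota arcs χ) := by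
  have hF : matF arcs χ = Matrix.diagonal (wOut arcs χ) := rfl
  have hBF : matB arcs χv + matFiota arcs χ =
      Matrix.diagonal fun e : {a // a ∈ arcs} => χv (e : V × V).2 + wOut arcs χ (e : V × V).2 := by
    rw [← Matrix.diagonal_add]
    rfl
  rw [hF, hBF, Matrix.fromBlocks_diagonal]
  congr 1
  ext (u | e)
  · exact wOut_midArcs_inl arcs χv χ u
  · exact wOut_midArcs_inr arcs χv χ e

theorem adjW_midArcs :
    adjW (midArcs arcs) (midWeight arcs χv χ ∘ Prod.snd) =
      Matrix.fromBlocks 0 (matM arcs χ) (matL arcs * matQ χv) (matWiota arcs χ) := by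
  have hQ : matQ χv = Matrix.diagonal χv := rfl
  ext (u | e) (v | f) <;>
    simp [adjW, matM, matL, hQ, matWiota, midWeight, eq_comm]

end MiddleDigraph

/-- **Block matrix identity for the middle digraph.** The vertex-weighted Laplacian of
`M(D)` is the block matrix `[[F, −M], [−LQ, B + F^ι − W^ι]]`; moreover `W^ι = L·M`
and `W = M·L`. -/
theorem lapVertex_middle_eq_fromBlocks {V : Type*} [Fintype V] [DecidableEq V]
    (arcs : Finset (V × V)) (χv : V → ℝ) (χ : V × V → ℝ)
    (hsimple : ∀ v : V, (v, v) ∉ arcs) :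
    lapVertex (midArcs arcs) (midWeight arcs χv χ) =
        Matrix.fromBlocks (matF arcs χ) (-(matM arcs χ))
          (-(matL arcs * matQ χv)) (matB arcs χv + matFiota arcs χ - matWiota arcs χ) ∧
      matWiota arcs χ = matL arcs * matM arcs χ ∧
      adjW arcs χ = matM arcs χ * matL arcs := by
  refine ⟨?_, matWiota_eq_matL_mul_matM arcs χ, adjW_eq_matM_mul_matL arcs χ⟩
  rw [lapVertex_eq_diagonal_sub_adjW _ _ (midArcs_loopless arcs hsimple), diagonal_wOut_midArcs,
    adjW_midArcs, sub_eq_add_neg, Matrix.fromBlocks_neg, Matrix.fromBlocks_add]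
  simp only [neg_zero, add_zero, zero_add, sub_eq_add_neg]
end

section
/- Main theorem: Let D be a weighted digraph with n vertices, vertex weights χ_i and arc weights χ_e, and M(D) its vertex-weighted middle digraph. Then κ^{vertex}(M(D),χ) = κ^{edge}(D,χ) · Π_{i=1}^{n} (χ_i + d_i)^{r_i}, where r_i is the indegree of v_i in D and d_i = Σ_{e: t(e)=v_i} χ_e. -/
open scoped Classical BigOperators

/-!
The vertex-weighted complexity of a digraph is its edge-weighted complexity for the weight
`χ (h a)`, so everything is about edge-weighted in-trees. By the matrix-tree theorem these are
counted by the minors of the Laplacian `L` with one row and column deleted: expanding such a minor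
row by row gives one term per choice of an out-arc at every non-root vertex, and the determinant
of that term is `1` if the choice is a tree and `0` if it contains a cycle. Summing over the root,
`κ^{edge}` is the coefficient of `X` in `det (X + L) = (-L).charpoly`.

Write `L(D) = diag d - P Q` with `P` the tail-weight and `Q` the head-incidence matrix of `D`.
Then `L(M(D))` is a block matrix whose conjugate by `[[1, 0], [Q, 1]]` is block upper triangular,
with diagonal blocks `L(D)` and the diagonal matrix of the numbers `χ (h e) + d (h e)`. Hence
`det (X + L(M(D))) = det (X + L(D)) * ∏ (X + χ_i + d_i) ^ r_i`. The rows of `L(D)` sum to zero,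
so `det (X + L(D))` has no constant term, and comparing the coefficients of `X` gives the theorem.
-/

open Function Matrix Polynomial

namespace Function

variable {α : Type*} {g : α → α} {r : α}

theorem exists_iterate_mem_periodicPts [Finite α] (g : α → α) (x : α) :
    ∃ m, g^[m] x ∈ periodicPts g := by
  obtain ⟨m, n, heq, hne⟩ : ∃ m n, g^[m] x = g^[n] x ∧ m ≠ n := by
    simpa [Injective] using not_injective_infinite_finite (g^[·] x)
  rcases lt_or_gt_of_ne hne with hlt | hlt
  · refine ⟨m, mk_mem_periodicPts (n := n - m) (by omega) ?_⟩
    rw [IsPeriodicPt, IsFixedPt, ← iterate_add_apply, Nat.sub_add_cancel hlt.le, heq]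
  · refine ⟨n, mk_mem_periodicPts (n := m - n) (by omega) ?_⟩
    rw [IsPeriodicPt, IsFixedPt, ← iterate_add_apply, Nat.sub_add_cancel hlt.le, heq]

theorem eq_of_mem_periodicPts_of_iterate_eq (hr : g r = r) {p : α} (hp : p ∈ periodicPts g)
    {k : ℕ} (hk : g^[k] p = r) : p = r := by
  obtain ⟨n, hn, hper⟩ := hp
  rw [← (hper.mul_const k).eq, ← Nat.sub_add_cancel (Nat.le_mul_of_pos_left k hn),
    iterate_add_apply, hk, iterate_fixed hr]

theorem exists_iterate_eq_of_periodicPts_subset [Finite α] (h : periodicPts g ⊆ {r}) (w : α) :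
    ∃ k, g^[k] w = r :=
  let ⟨m, hm⟩ := exists_iterate_mem_periodicPts g w
  ⟨m, h hm⟩

theorem iterate_eq_of_isChain {R : α → α → Prop} (hR : ∀ a b, R a b → g a = b) :
    ∀ (l : List α) (v w : α), (v :: (l ++ [w])).IsChain R → g^[l.length + 1] v = w
  | [], v, w, h => hR v w (List.isChain_pair.1 h)
  | b :: l, v, w, h => by
    rw [List.cons_append, List.isChain_cons_cons] at h
    rw [List.length_cons, iterate_succ_apply, hR v b h.1]
    exact iterate_eq_of_isChain hR l b w h.2

theorem exists_isChain_cycle_iff (hr : g r = r) {R : α → α → Prop}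
    (hR : ∀ a b, R a b ↔ a ≠ r ∧ g a = b) :
    (∃ v l, (v :: (l ++ [v])).IsChain R) ↔ ∃ p ∈ periodicPts g, p ≠ r := by
  constructor
  · rintro ⟨v, l, h⟩
    refine ⟨v, mk_mem_periodicPts l.length.succ_pos
      (iterate_eq_of_isChain (fun a b hab => ((hR a b).1 hab).2) l v v h), ?_⟩
    obtain ⟨b, hb⟩ : ∃ b, R v b := by
      cases l with
      | nil => exact ⟨v, List.isChain_pair.1 h⟩
      | cons b l => exact ⟨b, (List.isChain_cons_cons.1 h).1⟩
    exact ((hR v b).1 hb).1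
  · rintro ⟨p, hp, hpr⟩
    obtain ⟨n, hn⟩ :=
      Nat.exists_eq_succ_of_ne_zero (minimalPeriod_pos_of_mem_periodicPts hp).ne'
    have horbit : periodicOrbit g p =
        ((p :: (List.range n).map fun k => g^[k + 1] p : List α) : Cycle α) := by
      rw [periodicOrbit_def, hn, List.range_succ_eq_map, List.map_cons, List.map_map]
      rfl
    refine ⟨p, (List.range n).map fun k => g^[k + 1] p, ?_⟩
    rw [← Cycle.chain_coe_cons, ← horbit, periodicOrbit_chain' _ hp]
    intro k
    rw [hR, iterate_succ_apply']
    exact ⟨fun h => hpr (eq_of_mem_periodicPts_of_iterate_eq hr hp h), rfl⟩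

end Function

namespace Matrix

section FunctionalGraph

variable {α : Type*} [Fintype α] [DecidableEq α] {g : α → α} {r : α}

/-- Ordering the vertices by their distance to `r` makes the matrix block triangular with
identity blocks. -/
theorem det_one_sub_of_forall_exists_iterate {R : Type*} [CommRing R]
    (h : ∀ w, ∃ k, g^[k] w = r) :
    (1 - of fun u v : {u // u ≠ r} => if g u = v then (1 : R) else 0).det = 1 := by
  set M : Matrix {u // u ≠ r} {u // u ≠ r} R :=
    1 - of fun u v : {u // u ≠ r} => if g u = v then 1 else 0
  set d : α → ℕ := fun w => Nat.find (h w)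
  have hd : ∀ w, w ≠ r → d (g w) < d w := by
    intro w hw
    have hpos : 0 < d w := Nat.pos_of_ne_zero fun h0 => hw <| by
      simpa [show Nat.find (h w) = 0 from h0] using Nat.find_spec (h w)
    have : g^[d w - 1] (g w) = r := by
      rw [← iterate_succ_apply, Nat.succ_eq_add_one, Nat.sub_add_cancel hpos]
      exact Nat.find_spec (h w)
    exact lt_of_le_of_lt (Nat.find_le this) (Nat.sub_lt hpos one_pos)
  have hne : ∀ u v : {u // u ≠ r}, d u ≤ d v → g u ≠ v := fun u v huv hg => by
    have := hd u u.2
    rw [hg] at this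
    omega
  have htri : M.BlockTriangular fun u => OrderDual.toDual (d u) := by
    intro u v (huv : d u < d v)
    have h1 : u ≠ v := by rintro rfl; exact lt_irrefl _ huv
    simp [M, h1, hne u v huv.le]
  rw [htri.det]
  refine Finset.prod_eq_one fun k _ => ?_
  have hblock : M.toSquareBlock (fun u => OrderDual.toDual (d u)) k = 1 := by
    ext ⟨u, hu⟩ ⟨v, hv⟩
    have huv : d u = d v := hu.trans hv.symm
    simp [M, toSquareBlock_def, one_apply, hne u v huv.le, Subtype.ext_iff]
  rw [hblock, det_one]

/-- `g` permutes its periodic points, so the rows indexed by them sum to zero. -/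
theorem det_one_sub_of_mem_periodicPts {K : Type*} [Field K] {p : α} (hr : g r = r)
    (hp : p ∈ periodicPts g) (hpr : p ≠ r) :
    (1 - of fun u v : {u // u ≠ r} => if g u = v then (1 : K) else 0).det = 0 := by
  set x : {u // u ≠ r} → K := fun u => if (u : α) ∈ periodicPts g then 1 else 0
  have hx : x ≠ 0 := fun h0 => by simpa [x, hp] using congrFun h0 ⟨p, hpr⟩
  refine exists_vecMul_eq_zero_iff.1 ⟨x, hx, ?_⟩
  rw [vecMul_sub, vecMul_one, sub_eq_zero]
  ext v
  simp only [vecMul, dotProduct, of_apply, mul_ite, mul_one, mul_zero]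
  by_cases hv : (v : α) ∈ periodicPts g
  · obtain ⟨w, hw, hwv⟩ := (bijOn_periodicPts g).surjOn hv
    have hwr : w ≠ r := fun h => v.2 (by rw [← hwv, h, hr])
    rw [Finset.sum_eq_single ⟨w, hwr⟩]
    · simp [x, hw, hwv, hv]
    · intro u _ hu
      by_cases hu' : (u : α) ∈ periodicPts g
      · have hgu : g u ≠ v := fun hg =>
          hu (Subtype.ext ((bijOn_periodicPts g).injOn hu' hw (hg.trans hwv.symm)))
        simp [hgu]
      · simp [x, hu']
    · simp
  · rw [show x v = 0 by simp [x, hv]]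
    refine (Finset.sum_eq_zero fun u _ => ?_).symm
    by_cases hu : (u : α) ∈ periodicPts g
    · have hgu : g u ≠ v := fun hg => hv (hg ▸ (bijOn_periodicPts g).mapsTo hu)
      simp [hgu]
    · simp [x, hu]

theorem det_one_sub_eq_ite {K : Type*} [Field K] (hr : g r = r) :
    (1 - of fun u v : {u // u ≠ r} => if g u = v then (1 : K) else 0).det =
      if periodicPts g ⊆ {r} then 1 else 0 := by
  split_ifs with h
  · exact det_one_sub_of_forall_exists_iterate (exists_iterate_eq_of_periodicPts_subset h)
  · obtain ⟨p, hp, hpr⟩ := Set.not_subset.1 h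
    exact det_one_sub_of_mem_periodicPts hr hp hpr

end FunctionalGraph

variable {R : Type*} [CommRing R] {m n : Type*} [Fintype m] [Fintype n] [DecidableEq m]
  [DecidableEq n]

theorem det_of_sum_smul {ι : Type*} (s : n → Finset ι) (c : ι → R) (row : ι → n → R) :
    (of fun i => ∑ a ∈ s i, c a • row a).det =
      ∑ f ∈ Fintype.piFinset s, (∏ i, c (f i)) * (of fun i => row (f i)).det := by
  change (detRowAlternating : (n → R) [⋀^n]→ₗ[R] R).toMultilinearMap
    (fun i => ∑ a ∈ s i, c a • row a) = _
  rw [MultilinearMap.map_sum_finset]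
  exact Finset.sum_congr rfl fun f _ =>
    MultilinearMap.map_smul_univ _ (fun i => c (f i)) (fun i => row (f i))

theorem charpoly_fromBlocks_of_mul_eq (A : Matrix m m R) (B : Matrix m n R) (C : Matrix n m R)
    (D : Matrix n n R) (Q : Matrix n m R) (hQ : C + D * Q = Q * (A + B * Q)) :
    (fromBlocks A B C D).charpoly = (A + B * Q).charpoly * (D - Q * B).charpoly := by
  have hinv : fromBlocks 1 0 Q 1 * fromBlocks 1 0 (-Q) 1 = (1 : Matrix (m ⊕ n) (m ⊕ n) R) := by
    simp [fromBlocks_multiply, ← fromBlocks_one]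
  calc (fromBlocks A B C D).charpoly
      = (fromBlocks A B C D * fromBlocks 1 0 Q 1 * fromBlocks 1 0 (-Q) 1).charpoly := by
        rw [Matrix.mul_assoc, hinv, Matrix.mul_one]
    _ = (fromBlocks 1 0 (-Q) 1 * (fromBlocks A B C D * fromBlocks 1 0 Q 1)).charpoly :=
        charpoly_mul_comm _ _
    _ = (fromBlocks (A + B * Q) B 0 (D - Q * B)).charpoly := by
        simp only [fromBlocks_multiply, Matrix.mul_one, Matrix.mul_zero, Matrix.one_mul,
          Matrix.zero_mul, add_zero, zero_add, Matrix.neg_mul, hQ]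
        congr 2 <;> simp only [Matrix.mul_add, sub_eq_add_neg] <;> abel
    _ = _ := charpoly_fromBlocks_zero₂₁ _ _ _

theorem coeff_one_charpoly_neg (L : Matrix n n R) :
    (-L).charpoly.coeff 1 =
      ∑ r, (L.submatrix (Subtype.val : {u // u ≠ r} → n) Subtype.val).det := by
  rcases isEmpty_or_nonempty n with hn | hn
  · simp [charpoly_isEmpty, Polynomial.coeff_one]
  have hcard : Fintype.card n - (Fintype.card n - 1) = 1 := by
    have := Fintype.card_pos (α := n)
    omega
  rw [← hcard, charpoly_coeff_eq_sum_minors _ _ (Nat.sub_le _ _), Finset.mul_sum]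
  symm
  refine Finset.sum_bij (fun r _ => Finset.univ.erase r) (fun r _ => ?_) (fun r _ r' _ h => ?_)
    (fun s hs => ?_) (fun r _ => ?_)
  · simp [Finset.mem_powersetCard, Finset.card_erase_of_mem]
  · simpa using congrArg (r ∈ ·) h
  · obtain ⟨r, hr⟩ := Finset.card_eq_one.1 (show (Finset.univ \ s).card = 1 by
      rw [Finset.card_sdiff_of_subset (Finset.subset_univ _), (Finset.mem_powersetCard.1 hs).2,
        Finset.card_univ]
      exact hcard)
    refine ⟨r, Finset.mem_univ _, ?_⟩
    ext x
    have := congrArg (x ∈ ·) hr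
    simp only [Finset.mem_sdiff, Finset.mem_univ, true_and, Finset.mem_singleton] at this
    simp [← this]
  · simp only [submatrix_neg, Pi.neg_apply, det_neg, Fintype.card_coe,
      Finset.card_erase_of_mem (Finset.mem_univ r), Finset.card_univ, ← mul_assoc, ← pow_add,
      ← two_mul, pow_mul, neg_one_sq, one_pow, one_mul]
    exact (det_submatrix_equiv_self (Equiv.subtypeEquivRight (by simp)) _).symm

end Matrix

section Laplacian

variable {V : Type*} [DecidableEq V] (arcs : Finset (V × V)) (χ : V × V → ℝ)

theorem adjW_eq_sum (u v : V) :
    adjW arcs χ u v = ∑ a ∈ arcs with a.1 = u, if a.2 = v then χ a else 0 := by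
  rw [Finset.sum_filter, adjW, ← Finset.sum_ite_eq' arcs (u, v) χ]
  refine Finset.sum_congr rfl fun a _ => ?_
  simp only [Prod.ext_iff, ite_and]

def tailMat : Matrix V {a // a ∈ arcs} ℝ := of fun u e => if e.1.1 = u then χ e.1 else 0

def headMat : Matrix {a // a ∈ arcs} V ℝ := of fun e v => if e.1.2 = v then 1 else 0

theorem tailMat_mul_headMat : tailMat arcs χ * headMat arcs = adjW arcs χ := by
  refine Matrix.ext fun u v => ?_
  rw [mul_apply, adjW_eq_sum, Finset.sum_filter, ← Finset.sum_coe_sort arcs]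
  refine Finset.sum_congr rfl fun a _ => ?_
  simp only [tailMat, headMat, of_apply, mul_ite, mul_one, mul_zero]
  split_ifs <;> rfl

variable [Fintype V]

theorem adjW_mulVec_one : adjW arcs χ *ᵥ 1 = wOut arcs χ := by
  ext u
  simp only [mulVec, dotProduct, Pi.one_apply, mul_one, adjW_eq_sum]
  rw [Finset.sum_comm]
  simp [wOut]

theorem lapEdge_eq_diagonal_sub_adjW :
    lapEdge arcs χ = diagonal (wOut arcs χ) - adjW arcs χ := by
  ext u v
  by_cases h : u = v
  · subst h
    simp [lapEdge, Finset.sum_erase_eq_sub, ← adjW_mulVec_one, mulVec, dotProduct]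
  · simp [lapEdge, h]

theorem lapEdge_mulVec_one : lapEdge arcs χ *ᵥ 1 = 0 := by
  ext u
  simp [lapEdge_eq_diagonal_sub_adjW, sub_mulVec, adjW_mulVec_one, mulVec_diagonal]

theorem headMat_mulVec (f : V → ℝ) : headMat arcs *ᵥ f = fun e => f e.1.2 := by
  ext e
  simp [headMat, mulVec, dotProduct]

theorem diagonal_mul_headMat (d : V → ℝ) :
    diagonal (fun e : {a // a ∈ arcs} => d e.1.2) * headMat arcs = headMat arcs * diagonal d := by
  refine Matrix.ext fun e v => ?_
  rw [diagonal_mul, mul_diagonal]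
  by_cases h : e.1.2 = v <;> simp [headMat, h]

theorem tailMat_mulVec_one : tailMat arcs χ *ᵥ 1 = wOut arcs χ := by
  rw [← adjW_mulVec_one, ← tailMat_mul_headMat, ← mulVec_mulVec, headMat_mulVec]
  rfl

theorem prod_arcs_eq_prod_pow_indeg {M : Type*} [CommMonoid M] (F : V → M) :
    ∏ a ∈ arcs, F a.2 = ∏ i, F i ^ indeg arcs i := by
  rw [← Finset.prod_fiberwise arcs Prod.snd]
  refine Finset.prod_congr rfl fun i _ => ?_
  rw [Finset.prod_congr rfl fun a ha => by rw [(Finset.mem_filter.1 ha).2], Finset.prod_const]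
  rfl

end Laplacian

section MatrixTree

variable {W : Type*} {r : W} {f : {u // u ≠ r} → W × W}

theorem injective_of_fst_eq (hf : ∀ u, (f u).1 = u) : Injective f :=
  fun u v h => Subtype.ext (by rw [← hf u, h, hf v])

variable [DecidableEq W]

def succOfChoice (r : W) (f : {u // u ≠ r} → W × W) : W → W :=
  fun w => if h : w = r then r else (f ⟨w, h⟩).2

def incidenceRow (r : W) (a : W × W) : {u // u ≠ r} → ℝ :=
  fun v => (if a.1 = v then 1 else 0) - if a.2 = v then 1 else 0

variable [Fintype W]

def arcChoices (arcs : Finset (W × W)) (r : W) : Finset ({u // u ≠ r} → W × W) :=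
  Fintype.piFinset fun u => arcs.filter fun a => a.1 = (u : W)

theorem mem_arcChoices {arcs : Finset (W × W)} :
    f ∈ arcChoices arcs r ↔ ∀ u, f u ∈ arcs ∧ (f u).1 = u := by
  simp [arcChoices]

theorem mem_image_iff_succOfChoice (hf : ∀ u, (f u).1 = u) {a b : W} :
    (a, b) ∈ Finset.univ.image f ↔ a ≠ r ∧ succOfChoice r f a = b := by
  constructor
  · intro h
    obtain ⟨u, -, hu⟩ := Finset.mem_image.1 h
    obtain rfl : (u : W) = a := by rw [← hf u, hu]
    exact ⟨u.2, by rw [succOfChoice, dif_neg u.2, hu]⟩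
  · rintro ⟨ha, rfl⟩
    exact Finset.mem_image.2 ⟨⟨a, ha⟩, Finset.mem_univ _,
      Prod.ext (hf _) (dif_neg ha : succOfChoice r f a = _).symm⟩

theorem isSpTree_image_iff (hf : ∀ u, (f u).1 = u) :
    IsSpTree (Finset.univ.image f) r ↔ periodicPts (succOfChoice r f) ⊆ {r} := by
  have hout : ∀ v, v ≠ r → ∃! a, a ∈ Finset.univ.image f ∧ a.1 = v := by
    refine fun v hv =>
      ⟨f ⟨v, hv⟩, ⟨Finset.mem_image_of_mem f (Finset.mem_univ _), hf _⟩, ?_⟩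
    rintro a ⟨ha, rfl⟩
    obtain ⟨u, -, rfl⟩ := Finset.mem_image.1 ha
    congr
    exact Subtype.ext (hf u).symm
  have hroot : ∀ a ∈ Finset.univ.image f, a.1 ≠ r := by
    intro a ha
    obtain ⟨u, -, rfl⟩ := Finset.mem_image.1 ha
    exact hf u ▸ u.2
  have hcycle := exists_isChain_cycle_iff (R := fun a b : W => (a, b) ∈ Finset.univ.image f)
    (show succOfChoice r f r = r from dif_pos rfl) fun a b => mem_image_iff_succOfChoice hf
  rw [IsSpTree, and_iff_right hout, and_iff_right hroot]
  constructor
  · intro hC p hp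
    by_contra hpr
    obtain ⟨v, l, hvl⟩ := hcycle.2 ⟨p, hp, hpr⟩
    exact hC v l hvl
  · intro hP v l hvl
    obtain ⟨p, hp, hpr⟩ := hcycle.1 ⟨v, l, hvl⟩
    exact hpr (hP hp)

theorem det_incidenceRow_of_mem_arcChoices {arcs : Finset (W × W)} (hf : f ∈ arcChoices arcs r) :
    (of fun u => incidenceRow r (f u)).det =
      if periodicPts (succOfChoice r f) ⊆ {r} then 1 else 0 := by
  rw [← det_one_sub_eq_ite (K := ℝ) (g := succOfChoice r f) (dif_pos rfl)]
  congr 1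
  ext u v
  simp [incidenceRow, (mem_arcChoices.1 hf u).2, succOfChoice, u.2, one_apply, Subtype.ext_iff]

variable (arcs : Finset (W × W)) (χ : W × W → ℝ)

theorem trees_eq_image : trees arcs r =
    ((arcChoices arcs r).filter fun f => periodicPts (succOfChoice r f) ⊆ {r}).image
      fun f => Finset.univ.image f := by
  ext T
  simp only [trees, Finset.mem_filter, Finset.mem_powerset, Finset.mem_image, mem_arcChoices]
  constructor
  · rintro ⟨hTarcs, hT⟩
    choose f hf using fun u : {u // u ≠ r} => (hT.1 u u.2).exists
    have himage : Finset.univ.image f = T := by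
      ext a
      refine ⟨fun ha => ?_, fun ha => ?_⟩
      · obtain ⟨u, -, rfl⟩ := Finset.mem_image.1 ha
        exact (hf u).1
      · have ha1 := hT.2.1 a ha
        exact Finset.mem_image.2
          ⟨⟨a.1, ha1⟩, Finset.mem_univ _, (hT.1 a.1 ha1).unique (hf _) ⟨ha, rfl⟩⟩
    refine ⟨f, ⟨fun u => ⟨hTarcs (hf u).1, (hf u).2⟩, ?_⟩, himage⟩
    rw [← isSpTree_image_iff fun u => (hf u).2, himage]
    exact hT
  · rintro ⟨f, ⟨hf, hP⟩, rfl⟩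
    refine ⟨fun a ha => ?_, (isSpTree_image_iff fun u => (hf u).2).2 hP⟩
    obtain ⟨u, -, rfl⟩ := Finset.mem_image.1 ha
    exact (hf u).1

theorem kappaEdgeRooted_eq_sum_arcChoices : kappaEdgeRooted arcs χ r =
    ∑ f ∈ (arcChoices arcs r).filter (fun f => periodicPts (succOfChoice r f) ⊆ {r}),
      ∏ u, χ (f u) := by
  have htail : ∀ f ∈ arcChoices arcs r, ∀ u, (f u).1 = u := fun f hf u =>
    (mem_arcChoices.1 hf u).2
  rw [kappaEdgeRooted, trees_eq_image, Finset.sum_image]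
  · refine Finset.sum_congr rfl fun f hf => ?_
    exact Finset.prod_image fun u _ v _ h =>
      injective_of_fst_eq (htail f (Finset.mem_filter.1 hf).1) h
  · intro f₁ hf₁ f₂ hf₂ h
    funext u
    have h' : Finset.univ.image f₁ = Finset.univ.image f₂ := h
    obtain ⟨v, -, hv⟩ :=
      Finset.mem_image.1 (h' ▸ Finset.mem_image_of_mem f₁ (Finset.mem_univ u))
    obtain rfl : v = u := Subtype.ext <| by
      rw [← htail f₂ (Finset.mem_filter.1 hf₂).1, hv,
        htail f₁ (Finset.mem_filter.1 hf₁).1]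
    exact hv.symm

theorem minorAt_lapEdge (r : W) : minorAt (lapEdge arcs χ) r =
    of fun u : {u // u ≠ r} => ∑ a ∈ arcs with a.1 = (u : W), χ a • incidenceRow r a := by
  ext u v
  simp only [minorAt, submatrix_apply, lapEdge_eq_diagonal_sub_adjW, Matrix.sub_apply,
    diagonal_apply, adjW_eq_sum, of_apply, Finset.sum_apply, incidenceRow, Pi.smul_apply,
    smul_eq_mul, mul_sub, Finset.sum_sub_distrib, mul_ite, mul_one, mul_zero]
  congr 1
  rw [Finset.sum_congr rfl fun a ha => by rw [(Finset.mem_filter.1 ha).2]]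
  split_ifs <;> simp [wOut]

theorem det_minorAt_lapEdge (r : W) :
    (minorAt (lapEdge arcs χ) r).det = kappaEdgeRooted arcs χ r := by
  rw [minorAt_lapEdge, det_of_sum_smul, kappaEdgeRooted_eq_sum_arcChoices, Finset.sum_filter]
  refine Finset.sum_congr rfl fun f hf => ?_
  rw [det_incidenceRow_of_mem_arcChoices hf, mul_ite, mul_one, mul_zero]

end MatrixTree

section MiddleDigraph

variable {V : Type*} [Fintype V] [DecidableEq V] (arcs : Finset (V × V)) (χ : V × V → ℝ)
  (χv : V → ℝ)

theorem adjW_midArcs_s10 :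
    adjW (midArcs arcs) (fun p => midWeight arcs χv χ p.2) =
      fromBlocks 0 (tailMat arcs χ) (headMat arcs * diagonal χv)
        (headMat arcs * tailMat arcs χ) := by
  refine Matrix.ext fun x y => ?_
  rcases x with u | e <;> rcases y with v | f <;>
    simp [adjW, midArcs, midWeight, tailMat, headMat, mul_apply, diagonal_apply]

theorem wOut_midArcs :
    wOut (midArcs arcs) (fun p => midWeight arcs χv χ p.2) =
      Sum.elim (wOut arcs χ) (fun e => χv e.1.2 + wOut arcs χ e.1.2) := by
  rw [← adjW_mulVec_one, adjW_midArcs_s10, fromBlocks_mulVec]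
  have h1 : (1 : V ⊕ {a // a ∈ arcs} → ℝ) ∘ Sum.inl = 1 := rfl
  have h2 : (1 : V ⊕ {a // a ∈ arcs} → ℝ) ∘ Sum.inr = 1 := rfl
  rw [h1, h2, zero_mulVec, zero_add, tailMat_mulVec_one, ← mulVec_mulVec, ← mulVec_mulVec,
    tailMat_mulVec_one, headMat_mulVec, headMat_mulVec]
  congr 1
  ext e
  simp [mulVec_diagonal]

theorem charpoly_neg_lapEdge_midArcs :
    (-lapEdge (midArcs arcs) (fun p => midWeight arcs χv χ p.2)).charpoly =
      (-lapEdge arcs χ).charpoly * ∏ i, (X + C (χv i + wOut arcs χ i)) ^ indeg arcs i := by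
  set c : V → ℝ := fun i => χv i + wOut arcs χ i
  set P := tailMat arcs χ
  set Q := headMat arcs
  have hblocks : -lapEdge (midArcs arcs) (fun p => midWeight arcs χv χ p.2) =
      fromBlocks (-diagonal (wOut arcs χ)) P (Q * diagonal χv)
        (Q * P - diagonal fun e : {a // a ∈ arcs} => c e.1.2) := by
    rw [lapEdge_eq_diagonal_sub_adjW, adjW_midArcs_s10, wOut_midArcs, ← fromBlocks_diagonal, neg_sub,
      sub_eq_add_neg, fromBlocks_neg, fromBlocks_add]
    simp [sub_eq_add_neg, c, P, Q]
  have hQ : Q * diagonal χv + (Q * P - diagonal fun e : {a // a ∈ arcs} => c e.1.2) * Q =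
      Q * (-diagonal (wOut arcs χ) + P * Q) := by
    have hc : diagonal c = diagonal χv + diagonal (wOut arcs χ) := (diagonal_add _ _).symm
    rw [Matrix.sub_mul, diagonal_mul_headMat, hc]
    simp only [Matrix.mul_add, Matrix.mul_neg, Matrix.mul_assoc]
    abel
  rw [hblocks, charpoly_fromBlocks_of_mul_eq _ _ _ _ Q hQ, tailMat_mul_headMat,
    lapEdge_eq_diagonal_sub_adjW, neg_sub, sub_sub_cancel_left, neg_add_eq_sub, diagonal_neg,
    charpoly_diagonal]
  congr 1
  simp only [map_neg, sub_neg_eq_add]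
  exact (Finset.prod_coe_sort arcs fun a => X + C (c a.2)).trans
    (prod_arcs_eq_prod_pow_indeg arcs fun i => X + C (c i))

end MiddleDigraph

section Complexity

variable {W : Type*} [Fintype W] (arcs : Finset (W × W))

theorem kappaVertex_eq_kappaEdge (χv : W → ℝ) :
    kappaVertex arcs χv = kappaEdge arcs fun a => χv a.2 := rfl

variable [DecidableEq W] (χ : W × W → ℝ)

theorem kappaEdge_eq_coeff_charpoly : kappaEdge arcs χ = (-lapEdge arcs χ).charpoly.coeff 1 := by
  rw [kappaEdge, coeff_one_charpoly_neg]
  exact Finset.sum_congr rfl fun r _ => (det_minorAt_lapEdge arcs χ r).symm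

theorem coeff_zero_charpoly_neg_lapEdge [Nonempty W] :
    (-lapEdge arcs χ).charpoly.coeff 0 = 0 := by
  have hdet : (-lapEdge arcs χ).det = 0 :=
    exists_mulVec_eq_zero_iff.1
      ⟨1, one_ne_zero, by rw [neg_mulVec, lapEdge_mulVec_one, neg_zero]⟩
  simpa [det_eq_sign_charpoly_coeff] using hdet

end Complexity

theorem kappaVertex_middle_general {V : Type*} [Fintype V] [DecidableEq V]
    (arcs : Finset (V × V)) (χv : V → ℝ) (χ : V × V → ℝ) :
    kappaVertex (midArcs arcs) (midWeight arcs χv χ) =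
      kappaEdge arcs χ * ∏ i : V, (χv i + wOut arcs χ i) ^ (indeg arcs i) := by
  rcases isEmpty_or_nonempty V with hV | hV
  · simp [kappaVertex, kappaEdge]
  rw [kappaVertex_eq_kappaEdge, kappaEdge_eq_coeff_charpoly, charpoly_neg_lapEdge_midArcs,
    mul_coeff_one, coeff_zero_charpoly_neg_lapEdge, zero_mul, zero_add,
    kappaEdge_eq_coeff_charpoly, coeff_zero_eq_eval_zero]
  simp [eval_prod]

/-- **Main theorem.** `κ^{vertex}(M(D), χ) = κ^{edge}(D, χ) · Π_i (χ_i + d_i)^{r_i}`. -/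
theorem kappaVertex_middle {V : Type*} [Fintype V] [DecidableEq V]
    (arcs : Finset (V × V)) (χv : V → ℝ) (χ : V × V → ℝ)
    (hsimple : ∀ v : V, (v, v) ∉ arcs)
    (hposv : ∀ v : V, 0 < χv v) (hpose : ∀ a ∈ arcs, 0 < χ a) :
    kappaVertex (midArcs arcs) (midWeight arcs χv χ) =
      kappaEdge arcs χ * ∏ i : V, (χv i + wOut arcs χ i) ^ (indeg arcs i) :=
  kappaVertex_middle_general arcs χv χ
end
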